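/- Let 𝔤 be a stratified Lie algebra of step r with layers 𝔤₁,…,𝔤_r, and let 𝔭₁, 𝔭₂, 𝔨, the projections and the curvature operator R be as in the context. Then for all A ∈ 𝔤, B ∈ 𝔭₂ ⊕ 𝔨 and C ∈ 𝔨, one has R(A,B)C = 0. -/

import Mathlib

/-! Setup: stratified (Carnot) Lie algebra of step `r` with layers `g k`,
the decomposition `𝔤 = 𝔭₁ ⊕ 𝔭₂ ⊕ 𝔨`, the associated projections, and the
curvature operator `R(A,B)C = ∇_A ∇_B C - ∇_B ∇_A C - ∇_[A,B] C` of the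
vertical connection `∇_A C = ⁅pr₂ A, C⁆`. -/

variable {L : Type*} [LieRing L] [LieAlgebra ℝ L]

/-- The linear span of brackets of elements of two subspaces: `[S, T]`. -/
def bracketSpan (S T : Submodule ℝ L) : Submodule ℝ L :=
  Submodule.span ℝ {x : L | ∃ s ∈ S, ∃ t ∈ T, x = ⁅s, t⁆}

/-- `𝔭₁`: the sum of the odd-degree layers. -/
def oddPart (g : ℕ → Submodule ℝ L) : Submodule ℝ L :=
  ⨆ k ∈ {k : ℕ | Odd k}, g k

/-- `𝔭₂`: the sum of the even-degree layers of degree at most `⌊r/2⌋`. -/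
def evenLowPart (r : ℕ) (g : ℕ → Submodule ℝ L) : Submodule ℝ L :=
  ⨆ k ∈ {k : ℕ | Even k ∧ k ≤ r / 2}, g k

/-- `𝔨`: the sum of the even-degree layers of degree greater than `⌊r/2⌋`. -/
def evenHighPart (r : ℕ) (g : ℕ → Submodule ℝ L) : Submodule ℝ L :=
  ⨆ k ∈ {k : ℕ | Even k ∧ r / 2 < k}, g k

/-- The curvature operator of the vertical connection `∇_A C = ⁅pr₂ A, C⁆`:
`R(A,B)C = ∇_A (∇_B C) - ∇_B (∇_A C) - ∇_{⁅A,B⁆} C`. -/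
def curv (pr2 : L →ₗ[ℝ] L) (A B C : L) : L :=
  ⁅pr2 A, ⁅pr2 B, C⁆⁆ - ⁅pr2 B, ⁅pr2 A, C⁆⁆ - ⁅pr2 ⁅A, B⁆, C⁆

/-! Since `𝔤` is graded (`⁅𝔤ᵢ, 𝔤ⱼ⁆ ⊆ 𝔤ᵢ₊ⱼ`), the complement `𝔭₁ ⊕ 𝔨` of `𝔭₂` is stable under
brackets with the even part `𝔭₂ ⊕ 𝔨`, and `⁅𝔨, 𝔨⁆ = 0` because degrees in `𝔨` exceed `r / 2`.
Hence for `B = B₂ + Bₖ` the `𝔭₂`-component of `⁅A, B⁆` is that of `⁅pr₂ A, B₂⁆ = E₂ + Eₖ`,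
and by Jacobi `R(A, B) C = ⁅⁅pr₂ A, B₂⁆, C⁆ - ⁅E₂, C⁆ = ⁅Eₖ, C⁆ = 0`. -/

theorem Submodule.apply_add_eq_of_disjoint {R M : Type*} [Ring R] [AddCommGroup M] [Module R M]
    {P Q : Submodule R M} (hPQ : Disjoint P Q) {f : M → M}
    (hf : ∀ X, f X ∈ P ∧ X - f X ∈ Q) {y q : M} (hy : y ∈ P) (hq : q ∈ Q) : f (y + q) = y := by
  obtain ⟨hfP, hfQ⟩ := hf (y + q)
  have hQ := sub_mem hfQ hq
  rw [add_sub_right_comm, add_sub_cancel_right] at hQ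
  exact (sub_eq_zero.mp (Submodule.disjoint_def.mp hPQ _ (sub_mem hy hfP) hQ)).symm

def IsLieGrading {ι : Type*} [Add ι] (g : ι → Submodule ℝ L) : Prop :=
  ∀ i j, ∀ a ∈ g i, ∀ b ∈ g j, ⁅a, b⁆ ∈ g (i + j)

def evenPart (g : ℕ → Submodule ℝ L) : Submodule ℝ L :=
  ⨆ k ∈ {k : ℕ | Even k}, g k

section Stratified

variable {r : ℕ} {g : ℕ → Submodule ℝ L}

theorem lie_mem_succ_of_mem_one (hzero : ∀ m : ℕ, m = 0 ∨ r < m → g m = ⊥)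
    (hstrat : ∀ k : ℕ, 1 ≤ k → k + 1 ≤ r → g (k + 1) = bracketSpan (g 1) (g k))
    (htop : ∀ a ∈ g 1, ∀ b ∈ g r, ⁅a, b⁆ = 0) {j : ℕ} {a b : L} (ha : a ∈ g 1) (hb : b ∈ g j) :
    ⁅a, b⁆ ∈ g (j + 1) := by
  by_cases hj : 1 ≤ j ∧ j + 1 ≤ r
  · rw [hstrat j hj.1 hj.2]
    exact Submodule.subset_span ⟨a, ha, b, hb, rfl⟩
  · suffices ⁅a, b⁆ = 0 by rw [this]; exact zero_mem _
    rcases (by omega : j = r ∨ j = 0 ∨ r < j) with rfl | hj'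
    · exact htop a ha b hb
    · rw [hzero j hj', Submodule.mem_bot] at hb
      rw [hb, lie_zero]

theorem isLieGrading_of_stratified (hzero : ∀ m : ℕ, m = 0 ∨ r < m → g m = ⊥)
    (hstrat : ∀ k : ℕ, 1 ≤ k → k + 1 ≤ r → g (k + 1) = bracketSpan (g 1) (g k))
    (htop : ∀ a ∈ g 1, ∀ b ∈ g r, ⁅a, b⁆ = 0) : IsLieGrading g := by
  have bracket_one {j : ℕ} {a b : L} (ha : a ∈ g 1) (hb : b ∈ g j) : ⁅a, b⁆ ∈ g (j + 1) :=
    lie_mem_succ_of_mem_one hzero hstrat htop ha hb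
  intro i
  induction i with
  | zero =>
    intro j a ha b hb
    rw [hzero 0 (.inl rfl), Submodule.mem_bot] at ha
    rw [ha, zero_lie]; exact zero_mem _
  | succ i ih =>
    intro j a ha b hb
    rcases (by omega : i = 0 ∨ r < i + 1 ∨ 1 ≤ i ∧ i + 1 ≤ r) with rfl | hi | ⟨hi, hir⟩
    · rw [add_comm]; exact bracket_one ha hb
    · rw [hzero _ (.inr hi), Submodule.mem_bot] at ha
      rw [ha, zero_lie]; exact zero_mem _
    · rw [hstrat i hi hir] at ha
      induction ha using Submodule.span_induction with
      | mem x hx =>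
        obtain ⟨u, hu, v, hv, rfl⟩ := hx
        rw [lie_lie]
        refine sub_mem ?_ ?_
        · simpa only [add_right_comm] using bracket_one hu (ih j v hv b hb)
        · simpa only [add_assoc, add_comm 1] using ih (j + 1) v hv _ (bracket_one hu hb)
      | zero => rw [zero_lie]; exact zero_mem _
      | add x y _ _ hx hy => rw [add_lie]; exact add_mem hx hy
      | smul c x _ hx => rw [smul_lie]; exact Submodule.smul_mem _ _ hx

end Stratified

namespace IsLieGrading

variable {ι : Type*} [Add ι] {g : ι → Submodule ℝ L}

theorem lie_mem_biSup (hg : IsLieGrading g) {p q s : ι → Prop} (hpq : ∀ i j, p i → q j → s (i + j))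
    {x y : L} (hx : x ∈ ⨆ i ∈ {i | p i}, g i) (hy : y ∈ ⨆ j ∈ {j | q j}, g j) :
    ⁅x, y⁆ ∈ ⨆ k ∈ {k | s k}, g k := by
  have right (i : ι) (hi : p i) (a : L) (ha : a ∈ g i) :
      ⨆ j ∈ {j | q j}, g j ≤ (⨆ k ∈ {k | s k}, g k).comap (LieModule.toEnd ℝ L L a) :=
    iSup₂_le fun j hj b hb =>
      le_iSup₂ (f := fun k (_ : s k) => g k) (i + j) (hpq i j hi hj) (hg i j a ha b hb)
  have left : ⨆ i ∈ {i | p i}, g i ≤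
      (⨆ k ∈ {k | s k}, g k).comap ((LieModule.toEnd ℝ L L : L →ₗ[ℝ] Module.End ℝ L).flip y) :=
    iSup₂_le fun i hi a ha => right i hi a ha hy
  exact left hx

end IsLieGrading

section Parts

variable {r : ℕ} {g : ℕ → Submodule ℝ L}

theorem evenLowPart_sup_evenHighPart : evenLowPart r g ⊔ evenHighPart r g = evenPart g := by
  have hunion : {k : ℕ | Even k ∧ k ≤ r / 2} ∪ {k | Even k ∧ r / 2 < k} = {k | Even k} :=
    Set.ext fun k =>
      ⟨fun h => h.elim And.left And.left, fun h => (le_or_gt k (r / 2)).imp (⟨h, ·⟩) (⟨h, ·⟩)⟩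
  rw [evenLowPart, evenHighPart, evenPart, ← iSup_union, hunion]

theorem evenLowPart_le_evenPart : evenLowPart r g ≤ evenPart g :=
  le_sup_left.trans_eq evenLowPart_sup_evenHighPart

theorem disjoint_evenLowPart_oddPart_sup_evenHighPart (hg : iSupIndep g) :
    Disjoint (evenLowPart r g) (oddPart g ⊔ evenHighPart r g) := by
  rw [evenLowPart, oddPart, evenHighPart, ← iSup_union]
  refine hg.disjoint_biSup_biSup (Set.disjoint_left.mpr ?_)
  rintro k ⟨hk, hkr⟩ (hk' | ⟨_, hkr'⟩)
  · exact Nat.not_odd_iff_even.mpr hk hk'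
  · omega

namespace IsLieGrading

variable {x y : L}

theorem lie_mem_oddPart (hg : IsLieGrading g) (hx : x ∈ oddPart g) (hy : y ∈ evenPart g) :
    ⁅x, y⁆ ∈ oddPart g :=
  hg.lie_mem_biSup (fun _ _ hi hj => Odd.add_even hi hj) hx hy

theorem lie_mem_evenPart (hg : IsLieGrading g) (hx : x ∈ evenPart g) (hy : y ∈ evenPart g) :
    ⁅x, y⁆ ∈ evenPart g :=
  hg.lie_mem_biSup (fun _ _ hi hj => Even.add hi hj) hx hy

theorem lie_mem_evenHighPart (hg : IsLieGrading g) (hx : x ∈ evenHighPart r g)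
    (hy : y ∈ evenPart g) : ⁅x, y⁆ ∈ evenHighPart r g :=
  hg.lie_mem_biSup (fun _ _ hi hj => ⟨hi.1.add hj, by omega⟩) hx hy

theorem lie_mem_evenHighPart_of_mem_evenLowPart (hg : IsLieGrading g) (hx : x ∈ evenLowPart r g)
    (hy : y ∈ evenHighPart r g) : ⁅x, y⁆ ∈ evenHighPart r g :=
  hg.lie_mem_biSup (fun _ _ hi hj => ⟨hi.1.add hj.1, by omega⟩) hx hy

theorem lie_mem_oddPart_sup_evenHighPart (hg : IsLieGrading g)
    (hx : x ∈ oddPart g ⊔ evenHighPart r g) (hy : y ∈ evenPart g) :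
    ⁅x, y⁆ ∈ oddPart g ⊔ evenHighPart r g := by
  obtain ⟨x₁, hx₁, xₖ, hxₖ, rfl⟩ := Submodule.mem_sup.mp hx
  rw [add_lie]
  exact Submodule.add_mem_sup (hg.lie_mem_oddPart hx₁ hy) (hg.lie_mem_evenHighPart hxₖ hy)

theorem lie_eq_zero_of_mem_evenHighPart (hg : IsLieGrading g) (hzero : ∀ m, r < m → g m = ⊥)
    (hx : x ∈ evenHighPart r g) (hy : y ∈ evenHighPart r g) : ⁅x, y⁆ = 0 := by
  have hbot : ⨆ k ∈ {k : ℕ | r < k}, g k ≤ ⊥ := iSup₂_le fun k hk => (hzero k hk).le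
  exact (Submodule.mem_bot ℝ).mp (hbot (hg.lie_mem_biSup (fun _ _ hi hj => by omega) hx hy))

end IsLieGrading

end Parts

theorem carnot_curvature_vanishes_on_p2_k_general
    (r : ℕ) (g : ℕ → Submodule ℝ L)
    (hzero : ∀ m : ℕ, m = 0 ∨ r < m → g m = ⊥)
    (hinternal : DirectSum.IsInternal g)
    (hstrat : ∀ k : ℕ, 1 ≤ k → k + 1 ≤ r →
      g (k + 1) = bracketSpan (g 1) (g k))
    (htop : ∀ a ∈ g 1, ∀ b ∈ g r, ⁅a, b⁆ = 0)
    (pr1 pr2 prk : L →ₗ[ℝ] L)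
    (hproj : ∀ A : L, pr1 A ∈ oddPart g ∧ pr2 A ∈ evenLowPart r g ∧
      prk A ∈ evenHighPart r g ∧ pr1 A + pr2 A + prk A = A)
 :
    ∀ A : L, ∀ B ∈ evenLowPart r g ⊔ evenHighPart r g, ∀ C ∈ evenHighPart r g,
      curv pr2 A B C = 0 := by
  have hg : IsLieGrading g := isLieGrading_of_stratified hzero hstrat htop
  have hdisj : Disjoint (evenLowPart r g) (oddPart g ⊔ evenHighPart r g) :=
    disjoint_evenLowPart_oddPart_sup_evenHighPart hinternal.submodule_iSupIndep
  have hpr2 (X : L) : pr2 X ∈ evenLowPart r g ∧ X - pr2 X ∈ oddPart g ⊔ evenHighPart r g := by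
    obtain ⟨h₁, h₂, hₖ, hsum⟩ := hproj X
    rw [← eq_sub_of_add_eq ((add_right_comm _ _ _).trans hsum)]
    exact ⟨h₂, Submodule.add_mem_sup h₁ hₖ⟩
  intro A B hB C hC
  have hB_even : B ∈ evenPart g := evenLowPart_sup_evenHighPart.le hB
  obtain ⟨B₂, hB₂, Bₖ, hBₖ, rfl⟩ := Submodule.mem_sup.mp hB
  obtain ⟨E₂, hE₂, Eₖ, hEₖ, hE⟩ := Submodule.mem_sup.mp <| evenLowPart_sup_evenHighPart.ge <|
    hg.lie_mem_evenPart (evenLowPart_le_evenPart (hpr2 A).1) (evenLowPart_le_evenPart hB₂)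
  have hpr2B : pr2 (B₂ + Bₖ) = B₂ :=
    Submodule.apply_add_eq_of_disjoint hdisj hpr2 hB₂ (Submodule.mem_sup_right hBₖ)
  have hpr2AB : pr2 ⁅A, B₂ + Bₖ⁆ = E₂ := by
    have hsplit : ⁅A, B₂ + Bₖ⁆ = E₂ + (Eₖ + ⁅pr2 A, Bₖ⁆ + ⁅A - pr2 A, B₂ + Bₖ⁆) := by
      simp only [sub_lie, lie_add, ← hE]; abel
    have hrest : Eₖ + ⁅pr2 A, Bₖ⁆ + ⁅A - pr2 A, B₂ + Bₖ⁆ ∈ oddPart g ⊔ evenHighPart r g :=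
      add_mem (Submodule.mem_sup_right (add_mem hEₖ
          (hg.lie_mem_evenHighPart_of_mem_evenLowPart (hpr2 A).1 hBₖ)))
        (hg.lie_mem_oddPart_sup_evenHighPart (hpr2 A).2 hB_even)
    rw [hsplit]
    exact Submodule.apply_add_eq_of_disjoint hdisj hpr2 hE₂ hrest
  have hEₖC : ⁅Eₖ, C⁆ = 0 :=
    hg.lie_eq_zero_of_mem_evenHighPart (fun m hm => hzero m (.inr hm)) hEₖ hC
  rw [curv, hpr2B, hpr2AB, ← lie_lie, ← hE, add_lie, hEₖC]
  abel

theorem carnot_curvature_vanishes_on_p2_k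
    (r : ℕ) (hr : 1 ≤ r) (g : ℕ → Submodule ℝ L)
    (hzero : ∀ m : ℕ, m = 0 ∨ r < m → g m = ⊥)
    (hinternal : DirectSum.IsInternal g)
    (hstrat : ∀ k : ℕ, 1 ≤ k → k + 1 ≤ r →
      g (k + 1) = bracketSpan (g 1) (g k))
    (htop : ∀ a ∈ g 1, ∀ b ∈ g r, ⁅a, b⁆ = 0)
    (pr1 pr2 prk : L →ₗ[ℝ] L)
    (hproj : ∀ A : L, pr1 A ∈ oddPart g ∧ pr2 A ∈ evenLowPart r g ∧
      prk A ∈ evenHighPart r g ∧ pr1 A + pr2 A + prk A = A)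
 :
    ∀ A : L, ∀ B ∈ evenLowPart r g ⊔ evenHighPart r g, ∀ C ∈ evenHighPart r g,
      curv pr2 A B C = 0 :=
  carnot_curvature_vanishes_on_p2_k_general r g hzero hinternal hstrat htop pr1 pr2 prk hproj
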